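/- arXiv:1805.03608 — 9 statements merged into one kernel-verified Lean document; each statement's English description precedes it below -/
import Mathlib

section
/- Every noncrossing tree on n ≥ 2 vertices contains at least one primary edge. -/
/-- No two edges cross when the vertices are placed in increasing clockwise order. -/
def Noncrossing {n : ℕ} (G : SimpleGraph (Fin n)) : Prop :=
  ∀ i j k l : Fin n, i < j → j < k → k < l → G.Adj i k → ¬ G.Adj j l

/-- An edge `{i,j}` with `i < j` is primary iff `i` has no edge to any vertex in
`{j+1,…,n,1,…,i-1}` (i.e. to any `k` with `k < i` or `j < k`) and `j` has no edge
to any vertex in `{i+1,…,j-1}`. -/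
def IsPrimaryEdge {n : ℕ} (G : SimpleGraph (Fin n)) (i j : Fin n) : Prop :=
  i < j ∧ G.Adj i j ∧ (∀ k : Fin n, (k < i ∨ j < k) → ¬ G.Adj i k) ∧
    (∀ k : Fin n, i < k → k < j → ¬ G.Adj j k)

/-!
Let `i` be the largest vertex all of whose neighbours are larger than it, and `j` the largest
neighbour of `i`. Then `i` has no neighbour outside `[i, j]`. Every vertex `v` strictly between
`i` and `j` has a smaller neighbour, which by noncrossing cannot lie below `i`; descending
along such neighbours joins `v` to `i` without using the edge `ij`. Since `ij` is a bridge of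
the tree, `j` therefore has no neighbour strictly between `i` and `j`.
-/

namespace SimpleGraph

theorem adj_deleteEdges_singleton_of_ne {V : Type*} {G : SimpleGraph V} {a b u w : V}
    (h : G.Adj u w) (hua : u ≠ a) (hub : u ≠ b) : (G.deleteEdges {s(a, b)}).Adj u w := by
  simp only [deleteEdges_adj, Set.mem_singleton_iff, Sym2.eq_iff, not_or, not_and]
  exact ⟨h, fun h' ↦ absurd h' hua, fun h' ↦ absurd h' hub⟩

variable {α : Type*} [LinearOrder α] {G : SimpleGraph α}

theorem exists_adj_gt_and_forall_gt_exists_adj_lt [Finite α] [Nonempty α] (G : SimpleGraph α) :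
    ∃ i, (∀ w, G.Adj i w → i < w) ∧ ∀ v, i < v → ∃ w, G.Adj v w ∧ w < v := by
  set S : Set α := {v | ∀ w, G.Adj v w → v < w}
  obtain ⟨m, hm⟩ := Finite.exists_min (id : α → α)
  have hmS : m ∈ S := fun w hw ↦ (hm w).lt_of_ne hw.ne
  obtain ⟨i, hiS, hmax⟩ := S.exists_max_image id S.toFinite ⟨m, hmS⟩
  refine ⟨i, hiS, fun v hiv ↦ ?_⟩
  by_contra! hv
  exact (hmax v fun w hw ↦ (hv w hw).lt_of_ne hw.ne).not_gt hiv

theorem reachable_of_forall_mem_Ioo_exists_adj_mem_Ico [WellFoundedLT α] {a b : α}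
    (h : ∀ v ∈ Set.Ioo a b, ∃ w ∈ Set.Ico a v, G.Adj v w) :
    ∀ v ∈ Set.Ico a b, G.Reachable v a := by
  intro v
  induction v using WellFoundedLT.induction with
  | _ v ih =>
    rintro ⟨hav, hvb⟩
    obtain rfl | hav := hav.eq_or_lt
    · rfl
    obtain ⟨w, ⟨haw, hwv⟩, hvw⟩ := h v ⟨hav, hvb⟩
    exact hvw.reachable.trans (ih w hwv ⟨haw, hwv.trans hvb⟩)

end SimpleGraph

namespace Noncrossing

variable {n : ℕ} {G : SimpleGraph (Fin n)}

theorem le_of_adj_of_mem_Ioo (hNC : Noncrossing G) {i j v w : Fin n} (hij : G.Adj i j)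
    (hv : v ∈ Set.Ioo i j) (hvw : G.Adj v w) : i ≤ w := by
  by_contra! hwi
  exact hNC w i v j hwi hv.1 hv.2 hvw.symm hij

theorem reachable_deleteEdges_of_mem_Ioo (hNC : Noncrossing G) {i j : Fin n} (hij : G.Adj i j)
    (hdesc : ∀ v, i < v → ∃ w, G.Adj v w ∧ w < v) {v : Fin n} (hv : v ∈ Set.Ioo i j) :
    (G.deleteEdges {s(i, j)}).Reachable v i := by
  refine SimpleGraph.reachable_of_forall_mem_Ioo_exists_adj_mem_Ico (b := j) ?_ v
    ⟨hv.1.le, hv.2⟩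
  intro u hu
  obtain ⟨w, huw, hwu⟩ := hdesc u hu.1
  exact ⟨w, ⟨hNC.le_of_adj_of_mem_Ioo hij hu huw, hwu⟩,
    SimpleGraph.adj_deleteEdges_singleton_of_ne huw hu.1.ne' hu.2.ne⟩

end Noncrossing

/-- Every noncrossing tree on `n ≥ 2` vertices contains at least one primary edge. -/
theorem exists_primary_edge (n : ℕ) (hn : 2 ≤ n) (G : SimpleGraph (Fin n))
    (hT : G.IsTree) (hNC : Noncrossing G) :
    ∃ i j : Fin n, IsPrimaryEdge G i j := by
  have : Nontrivial (Fin n) := Fin.nontrivial_iff_two_le.mpr hn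
  obtain ⟨i, hi_up, hdesc⟩ := G.exists_adj_gt_and_forall_gt_exists_adj_lt
  obtain ⟨j, hij, hj_max⟩ := (G.neighborSet i).exists_max_image id (Set.toFinite _)
    (hT.connected.preconnected.exists_adj_of_nontrivial i)
  have hbridge : G.IsBridge s(i, j) :=
    SimpleGraph.isAcyclic_iff_forall_adj_isBridge.mp hT.isAcyclic hij
  refine ⟨i, j, hi_up j hij, hij, ?_, ?_⟩
  · rintro k (hki | hjk) hik
    · exact (hi_up k hik).not_gt hki
    · exact (hj_max k hik).not_gt hjk
  · intro k hik hkj hjk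
    refine SimpleGraph.isBridge_iff.mp hbridge ?_
    refine (hNC.reachable_deleteEdges_of_mem_Ioo hij hdesc ⟨hik, hkj⟩).symm.trans ?_
    exact (SimpleGraph.adj_deleteEdges_singleton_of_ne hjk.symm hik.ne' hkj.ne).reachable
end

section
/- For each vertex i of a noncrossing tree on n ≥ 2 vertices, let f(i) denote the first neighbor of i encountered moving counterclockwise from i. Then iterating f starting from any vertex eventually reaches a pair {i, j} with f(i)=j and f(j)=i, and this pair is a primary edge. -/
/-- The counterclockwise distance from `i` to `k` on the circle `0,…,n-1`
(the vertices being placed in clockwise order). -/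
def ccwDist (n : ℕ) (i k : Fin n) : ℕ := (i.val + n - k.val) % n

open Function

theorem Function.exists_iterate_mem_periodicPts {α : Type*} [Finite α] (f : α → α) (v : α) :
    ∃ m, f^[m] v ∈ periodicPts f := by
  obtain ⟨a, b, hne, heq⟩ := Finite.exists_ne_map_eq_of_infinite (fun m : ℕ => f^[m] v)
  wlog hab : a < b generalizing a b
  · exact this b a hne.symm heq.symm (by omega)
  refine ⟨a, b - a, by omega, ?_⟩
  change f^[b - a] (f^[a] v) = f^[a] v
  rw [← iterate_add_apply, Nat.sub_add_cancel hab.le]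
  exact heq.symm

namespace SimpleGraph

variable {V : Type*} {G : SimpleGraph V} {f : V → V}

/-- The iterates `x, f x, f² x` are pairwise distinct, so no step of the orbit uses `{x, f x}`. -/
theorem reachable_iterate_deleteEdges (hf : ∀ v, G.Adj v (f v)) {x : V}
    (hp : 3 ≤ minimalPeriod f x) {i : ℕ} (hi : 1 ≤ i) (hip : i ≤ minimalPeriod f x) :
    (G.deleteEdges {s(x, f x)}).Reachable (f x) (f^[i] x) := by
  induction i, hi using Nat.le_induction with
  | base => rfl
  | succ i hi ih =>
    refine (ih (by omega)).trans (Adj.reachable ?_)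
    rw [iterate_succ_apply']
    refine deleteEdges_adj.mpr ⟨hf _, fun hmem => ?_⟩
    have hinj {k l : ℕ} (hk : k < minimalPeriod f x) (hl : l < minimalPeriod f x)
        (h : f^[k] x = f^[l] x) : k = l :=
      (iterate_eq_iterate_iff_of_lt_minimalPeriod hk hl).mp h
    rcases Sym2.eq_iff.mp (Set.mem_singleton_iff.mp hmem) with ⟨h0, -⟩ | ⟨h1, h2⟩
    · exact absurd (hinj (l := 0) (by omega) (by omega) h0) (by omega)
    · obtain rfl : i = 1 := hinj (l := 1) (by omega) (by omega) h1
      exact absurd (hinj (k := 2) (l := 0) (by omega) (by omega) h2) (by omega)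

theorem IsAcyclic.minimalPeriod_le_two (hG : G.IsAcyclic) (hf : ∀ v, G.Adj v (f v)) (x : V) :
    minimalPeriod f x ≤ 2 := by
  by_contra! hp
  have hbridge := isAcyclic_iff_forall_adj_isBridge.mp hG (hf x)
  refine isBridge_iff.mp hbridge (Reachable.symm ?_)
  have := reachable_iterate_deleteEdges hf hp (by omega) le_rfl
  rwa [(isPeriodicPt_minimalPeriod f x).eq] at this

theorem IsAcyclic.exists_iterate_apply_apply_eq [Finite V] (hG : G.IsAcyclic)
    (hf : ∀ v, G.Adj v (f v)) (v : V) : ∃ m, f (f (f^[m] v)) = f^[m] v := by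
  obtain ⟨m, hm⟩ := exists_iterate_mem_periodicPts f v
  have hpos := minimalPeriod_pos_iff_mem_periodicPts.mpr hm
  have hne_one : minimalPeriod f (f^[m] v) ≠ 1 :=
    fun h => (hf _).ne (minimalPeriod_eq_one_iff_isFixedPt.mp h).symm
  have htwo : minimalPeriod f (f^[m] v) = 2 := by
    have := hG.minimalPeriod_le_two hf (f^[m] v)
    omega
  have hperiodic := isPeriodicPt_minimalPeriod f (f^[m] v)
  rw [htwo] at hperiodic
  exact ⟨m, hperiodic⟩

end SimpleGraph

section ccwDist

variable {n : ℕ}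

theorem ccwDist_of_le {i k : Fin n} (h : k ≤ i) : ccwDist n i k = i - k := by
  have := i.isLt
  rw [ccwDist, show (i : ℕ) + n - k = i - k + n by omega, Nat.add_mod_right,
    Nat.mod_eq_of_lt (by omega)]

theorem ccwDist_of_lt {i k : Fin n} (h : i < k) : ccwDist n i k = i + n - k := by
  have : (i : ℕ) < k := h
  exact Nat.mod_eq_of_lt (by omega)

end ccwDist

theorem isPrimaryEdge_of_apply_eq {n : ℕ} {G : SimpleGraph (Fin n)} {f : Fin n → Fin n}
    (hfirst : ∀ i k : Fin n, G.Adj i k → ccwDist n i (f i) ≤ ccwDist n i k)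
    {a b : Fin n} (hab : a < b) (hGab : G.Adj a b) (hfa : f a = b) (hfb : f b = a) :
    IsPrimaryEdge G a b := by
  refine ⟨hab, hGab, fun k hk hak => ?_, fun k hak hkb hbk => ?_⟩
  · have hle := hfa ▸ hfirst a k hak
    rw [ccwDist_of_lt hab] at hle
    rcases hk with hka | hbk
    · rw [ccwDist_of_le hka.le] at hle
      have := b.isLt
      omega
    · rw [ccwDist_of_lt (hab.trans hbk)] at hle
      have : (b : ℕ) < k := hbk
      omega
  · have hle := hfb ▸ hfirst b k hbk
    rw [ccwDist_of_le hab.le, ccwDist_of_le hkb.le] at hle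
    have : (a : ℕ) < k := hak
    omega

theorem iterate_first_ccw_neighbor_reaches_primary_edge_general (n : ℕ)
    (G : SimpleGraph (Fin n)) (hT : G.IsTree)
    (f : Fin n → Fin n)
    (hadj : ∀ i : Fin n, G.Adj i (f i))
    (hfirst : ∀ i k : Fin n, G.Adj i k → ccwDist n i (f i) ≤ ccwDist n i k) :
    ∀ v : Fin n, ∃ m : ℕ,
      f (f (f^[m] v)) = f^[m] v ∧
      (IsPrimaryEdge G (f^[m] v) (f (f^[m] v)) ∨
        IsPrimaryEdge G (f (f^[m] v)) (f^[m] v)) := by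
  intro v
  obtain ⟨m, hm⟩ := hT.isAcyclic.exists_iterate_apply_apply_eq hadj v
  refine ⟨m, hm, ?_⟩
  set x := f^[m] v
  rcases lt_or_gt_of_ne (hadj x).ne with hlt | hgt
  · exact .inl (isPrimaryEdge_of_apply_eq hfirst hlt (hadj x) rfl hm)
  · exact .inr (isPrimaryEdge_of_apply_eq hfirst hgt (hadj x).symm hm rfl)

/-- If `f i` is the first neighbor of `i` encountered moving counterclockwise from `i`
in a noncrossing tree on `n ≥ 2` vertices, then iterating `f` from any vertex eventually
reaches a pair `{i, j}` with `f i = j` and `f j = i`, and this pair is a primary edge. -/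
theorem iterate_first_ccw_neighbor_reaches_primary_edge (n : ℕ) (hn : 2 ≤ n)
    (G : SimpleGraph (Fin n)) (hT : G.IsTree) (hNC : Noncrossing G)
    (f : Fin n → Fin n)
    (hadj : ∀ i : Fin n, G.Adj i (f i))
    (hfirst : ∀ i k : Fin n, G.Adj i k → ccwDist n i (f i) ≤ ccwDist n i k) :
    ∀ v : Fin n, ∃ m : ℕ,
      f (f (f^[m] v)) = f^[m] v ∧
      (IsPrimaryEdge G (f^[m] v) (f (f^[m] v)) ∨
        IsPrimaryEdge G (f (f^[m] v)) (f^[m] v)) :=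
  iterate_first_ccw_neighbor_reaches_primary_edge_general n G hT f hadj hfirst
end

section
/- If {i,j} with i<j is a primary edge of a noncrossing tree T on n vertices, then deleting the edge {i,j} disconnects T into exactly two subtrees, one spanning the vertex set {i, i+1, ..., j-1} and the other spanning {j, j+1, ..., n, 1, ..., i-1}. -/
/-- A predicate closed under adjacency is closed under reachability. -/
lemma walk_closed {V : Type*} {H : SimpleGraph V} {S : V → Prop}
    (hS : ∀ a b, S a → H.Adj a b → S b) :
    ∀ {u v : V}, H.Walk u v → S u → S v := by
  intro u v p
  induction p with
  | nil => exact id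
  | cons h p ih => exact fun hu => ih (hS _ _ hu h)

/-- Deleting a primary edge `{i,j}` (with `i < j`) of a noncrossing tree disconnects it
into exactly two subtrees: one spanning the vertices `{i, i+1, …, j-1}`
(those reachable from `i`) and the other spanning `{j, j+1, …, n, 1, …, i-1}`
(those reachable from `j`). -/
theorem primary_edge_splits_tree {n : ℕ} (G : SimpleGraph (Fin n))
    (hT : G.IsTree) (hNC : Noncrossing G) (i j : Fin n)
    (hp : IsPrimaryEdge G i j) :
    (∀ k : Fin n, (G.deleteEdges {s(i, j)}).Reachable i k ↔ (i ≤ k ∧ k < j)) ∧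
    (∀ k : Fin n, (G.deleteEdges {s(i, j)}).Reachable j k ↔ ¬(i ≤ k ∧ k < j)) ∧
    ¬ (G.deleteEdges {s(i, j)}).Reachable i j := by
  obtain ⟨hij, hadj, h1, h2⟩ := hp
  set G' := G.deleteEdges {s(i, j)} with hG'
  -- S is closed under adjacency in G'
  have hS : ∀ a b : Fin n, (i ≤ a ∧ a < j) → G'.Adj a b → (i ≤ b ∧ b < j) := by
    intro a b ⟨ha1, ha2⟩ hab
    rw [hG', SimpleGraph.deleteEdges_adj, Set.mem_singleton_iff] at hab
    obtain ⟨hab, hne⟩ := hab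
    by_contra hb
    push_neg at hb
    rcases lt_or_ge b i with hbi | hib
    · -- b < i
      rcases eq_or_lt_of_le ha1 with rfl | hia
      · exact h1 b (Or.inl hbi) hab
      · exact hNC b i a j hbi hia ha2 hab.symm hadj
    · rcases eq_or_lt_of_le (hb hib) with rfl | hjb
      · -- b = j
        rcases eq_or_lt_of_le ha1 with rfl | hia
        · exact hne rfl
        · exact h2 a hia ha2 hab.symm
      · -- j < b
        rcases eq_or_lt_of_le ha1 with rfl | hia
        · exact h1 b (Or.inr hjb) hab
        · exact hNC i a j b hia ha2 hjb hadj hab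
  -- complement of S is closed under adjacency in G'
  have hTc : ∀ a b : Fin n, ¬(i ≤ a ∧ a < j) → G'.Adj a b → ¬(i ≤ b ∧ b < j) := by
    intro a b ha hab ⟨hb1, hb2⟩
    rw [hG', SimpleGraph.deleteEdges_adj, Set.mem_singleton_iff] at hab
    obtain ⟨hab, hne⟩ := hab
    push_neg at ha
    rcases lt_or_ge a i with hai | hia
    · rcases eq_or_lt_of_le hb1 with rfl | hib
      · exact h1 a (Or.inl hai) hab.symm
      · exact hNC a i b j hai hib hb2 hab hadj
    · rcases eq_or_lt_of_le (ha hia) with rfl | hja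
      · -- a = j
        rcases eq_or_lt_of_le hb1 with rfl | hib
        · exact hne (Sym2.eq_swap)
        · exact h2 b hib hb2 hab
      · -- j < a
        rcases eq_or_lt_of_le hb1 with rfl | hib
        · exact h1 a (Or.inr hja) hab.symm
        · exact hNC i b j a hib hb2 hja hadj hab.symm
  -- every vertex is reachable from i or from j in G'
  have hR : ∀ a b : Fin n, (G'.Reachable i a ∨ G'.Reachable j a) → G.Adj a b →
      (G'.Reachable i b ∨ G'.Reachable j b) := by
    intro a b ha hab
    by_cases he : s(a, b) = s(i, j)
    · rw [Sym2.eq_iff] at he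
      rcases he with ⟨rfl, rfl⟩ | ⟨rfl, rfl⟩
      · exact Or.inr (SimpleGraph.Reachable.refl _)
      · exact Or.inl (SimpleGraph.Reachable.refl _)
    · have hab' : G'.Adj a b := by
        rw [hG', SimpleGraph.deleteEdges_adj, Set.mem_singleton_iff]
        exact ⟨hab, he⟩
      rcases ha with ha | ha
      · exact Or.inl (ha.trans hab'.reachable)
      · exact Or.inr (ha.trans hab'.reachable)
  have hcover : ∀ k : Fin n, G'.Reachable i k ∨ G'.Reachable j k := by
    intro k
    obtain ⟨p⟩ := hT.isConnected.preconnected i k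
    exact walk_closed hR p (Or.inl (SimpleGraph.Reachable.refl _))
  have hA : ∀ k : Fin n, G'.Reachable i k → (i ≤ k ∧ k < j) := by
    intro k h
    obtain ⟨p⟩ := h
    exact walk_closed hS p ⟨le_refl i, hij⟩
  have hB : ∀ k : Fin n, G'.Reachable j k → ¬(i ≤ k ∧ k < j) := by
    intro k h
    obtain ⟨p⟩ := h
    exact walk_closed hTc p (fun ⟨_, hjj⟩ => lt_irrefl j hjj)
  refine ⟨?_, ?_, ?_⟩
  · intro k
    refine ⟨hA k, fun hk => ?_⟩
    rcases hcover k with h | h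
    · exact h
    · exact absurd hk (hB k h)
  · intro k
    refine ⟨hB k, fun hk => ?_⟩
    rcases hcover k with h | h
    · exact absurd (hA k h) hk
    · exact h
  · intro h
    exact lt_irrefl j (hA j h).2
end

section
/- The sequence b defined by b_1 = 1 and b_n = (n/2) * sum_{i=1}^{n-1} C(n-2, i-1) * b_i * b_{n-i} for n ≥ 2 satisfies b_n = n^{n-2} for all n ≥ 1. -/
open Finset Polynomial

def pA (x : ℚ) (k : ℕ) : ℚ := if k = 0 then 1 else x * (x + k) ^ (k - 1)


lemma fd : ∀ (n : ℕ), ∀ j < n, ∀ x : ℚ,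
    ∑ k ∈ range (n+1), (-1:ℚ)^(n-k) * (n.choose k) * (x + k)^j = 0 := by
  intro n
  induction n with
  | zero => intro j hj; omega
  | succ n ih =>
    intro j hj x
    have hV : ∑ k ∈ range (n+1), (-1:ℚ)^(n-k) * (n.choose (k+1)) * (x + (k+1:ℕ))^j
          + (-1:ℚ)^(n+1-0) * ((n+1).choose 0) * (x + (0:ℕ))^j
        = - ∑ k ∈ range (n+1), (-1:ℚ)^(n-k) * (n.choose k) * (x + k)^j := by
      have e1 : ∑ k ∈ range (n+2), (-1:ℚ)^(n+1-k) * (n.choose k) * (x + k)^j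
          = ∑ k ∈ range (n+1), (-1:ℚ)^(n-k) * (n.choose (k+1)) * (x + (k+1:ℕ))^j
            + (-1:ℚ)^(n+1-0) * ((n+1).choose 0) * (x + (0:ℕ))^j := by
        rw [Finset.sum_range_succ' (fun k => (-1:ℚ)^(n+1-k) * (n.choose k) * (x + k)^j) (n+1)]
        congr 1
        · refine Finset.sum_congr rfl fun k hk => ?_
          have h1 : n + 1 - (k+1) = n - k := by omega
          rw [h1]
        · norm_num
      have e2 : ∑ k ∈ range (n+2), (-1:ℚ)^(n+1-k) * (n.choose k) * (x + k)^j
          = - ∑ k ∈ range (n+1), (-1:ℚ)^(n-k) * (n.choose k) * (x + k)^j := by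
        rw [Finset.sum_range_succ]
        simp only [Nat.choose_succ_self, Nat.cast_zero, mul_zero, zero_mul, add_zero]
        rw [← Finset.sum_neg_distrib]
        refine Finset.sum_congr rfl fun k hk => ?_
        simp only [mem_range] at hk
        have h2 : n + 1 - k = (n - k) + 1 := by omega
        rw [h2, pow_succ]
        ring
      rw [← e1, e2]
    have hT : ∑ k ∈ range (n+2), (-1:ℚ)^(n+1-k) * ((n+1).choose k) * (x + k)^j
        = ∑ k ∈ range (n+1), (-1:ℚ)^(n-k) * (n.choose k) * ((x+1 + k)^j - (x + k)^j) := by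
      rw [Finset.sum_range_succ' (fun k => (-1:ℚ)^(n+1-k) * ((n+1).choose k) * (x + k)^j) (n+1)]
      have e3 : ∀ k ∈ range (n+1),
          (-1:ℚ)^(n+1-(k+1)) * ((n+1).choose (k+1)) * (x + (k+1:ℕ))^j
          = (-1:ℚ)^(n-k) * (n.choose k) * (x+1 + k)^j
            + (-1:ℚ)^(n-k) * (n.choose (k+1)) * (x + (k+1:ℕ))^j := by
        intro k hk
        have h1 : n + 1 - (k+1) = n - k := by omega
        rw [h1, Nat.choose_succ_succ]
        push_cast
        ring
      rw [Finset.sum_congr rfl e3, Finset.sum_add_distrib, add_assoc, hV]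
      simp only [mul_sub]
      rw [Finset.sum_sub_distrib]
      ring
    rw [hT]
    have e4 : ∀ k ∈ range (n+1), (-1:ℚ)^(n-k) * (n.choose k) * ((x+1 + k)^j - (x + k)^j)
        = ∑ i ∈ range j, (j.choose i : ℚ) * ((-1:ℚ)^(n-k) * (n.choose k) * (x + k)^i) := by
      intro k hk
      have hb : (x+1+(k:ℚ))^j = ((x+(k:ℚ))+1)^j := by ring_nf
      rw [hb, add_pow]
      rw [Finset.sum_range_succ]
      simp only [one_pow, mul_one, Nat.choose_self, Nat.cast_one]
      rw [add_sub_cancel_right, Finset.mul_sum]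
      refine Finset.sum_congr rfl fun i hi => ?_
      ring
    rw [Finset.sum_congr rfl e4, Finset.sum_comm]
    refine Finset.sum_eq_zero fun i hi => ?_
    simp only [mem_range] at hi
    rw [← Finset.mul_sum, ih i (by omega) x, mul_zero]

lemma abel : ∀ (n : ℕ) (x y : ℚ),
    ∑ k ∈ range (n+1), (n.choose k : ℚ) * pA x k * (y + ((n - k : ℕ) : ℚ)) ^ (n - k)
      = (x + y + n) ^ n := by
  intro n
  induction n with
  | zero => intro x y; simp [pA]
  | succ n ih =>
    intro x y
    set P : Polynomial ℚ :=
      ∑ k ∈ range (n+2), Polynomial.C (((n+1).choose k : ℚ) * pA x k) *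
        (Polynomial.X + Polynomial.C (((n+1-k : ℕ)):ℚ)) ^ (n+1-k) with hPdef
    set Q : Polynomial ℚ := (Polynomial.C x + Polynomial.X + Polynomial.C (((n+1:ℕ)):ℚ)) ^ (n+1)
      with hQdef
    have hPeval : ∀ z : ℚ, P.eval z
        = ∑ k ∈ range (n+2), ((n+1).choose k : ℚ) * pA x k * (z + ((n+1-k : ℕ):ℚ)) ^ (n+1-k) := by
      intro z
      rw [hPdef, Polynomial.eval_finset_sum]
      refine Finset.sum_congr rfl fun k hk => ?_
      simp
    have hQeval : ∀ z : ℚ, Q.eval z = (x + z + ((n+1:ℕ):ℚ)) ^ (n+1) := by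
      intro z; rw [hQdef]; simp
    have hdP : ∀ z : ℚ, (Polynomial.derivative P).eval z
        = ((n+1:ℕ):ℚ) * (x + (z+1) + n) ^ n := by
      intro z
      rw [hPdef, map_sum, Polynomial.eval_finset_sum]
      have e1 : ∀ k ∈ range (n+2),
          (Polynomial.derivative (Polynomial.C (((n+1).choose k : ℚ) * pA x k) *
            (Polynomial.X + Polynomial.C (((n+1-k : ℕ)):ℚ)) ^ (n+1-k))).eval z
          = (((n+1).choose k : ℚ) * pA x k) * ((n+1-k : ℕ):ℚ) * (z + ((n+1-k : ℕ):ℚ)) ^ (n+1-k-1) := by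
        intro k hk
        rw [Polynomial.derivative_C_mul, Polynomial.derivative_pow]
        simp
        ring
      rw [Finset.sum_congr rfl e1, Finset.sum_range_succ]
      have hlast : (((n+1).choose (n+1) : ℚ) * pA x (n+1)) * ((n+1-(n+1) : ℕ):ℚ) *
          (z + ((n+1-(n+1) : ℕ):ℚ)) ^ (n+1-(n+1)-1) = 0 := by
        simp
      rw [hlast, add_zero]
      have e2 : ∀ k ∈ range (n+1),
          (((n+1).choose k : ℚ) * pA x k) * ((n+1-k : ℕ):ℚ) * (z + ((n+1-k : ℕ):ℚ)) ^ (n+1-k-1)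
          = ((n+1:ℕ):ℚ) * ((n.choose k : ℚ) * pA x k * ((z+1) + ((n-k : ℕ):ℚ)) ^ (n-k)) := by
        intro k hk
        simp only [mem_range] at hk
        have h1 : n + 1 - k - 1 = n - k := by omega
        have h2 : ((n+1-k : ℕ):ℚ) = ((n-k : ℕ):ℚ) + 1 := by
          have : n + 1 - k = (n - k) + 1 := by omega
          rw [this]; push_cast; ring
        have h3 : ((n+1).choose k : ℚ) * ((n+1-k : ℕ):ℚ) = ((n+1:ℕ):ℚ) * (n.choose k : ℚ) := by
          have h4 := Nat.choose_mul_succ_eq n k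
          have h5 : ((n.choose k * (n+1) : ℕ) : ℚ) = (((n+1).choose k * (n+1-k) : ℕ) : ℚ) := by
            exact_mod_cast h4
          push_cast at h5 ⊢
          linarith
        rw [h1, h2]
        have h6 : z + (((n-k : ℕ):ℚ) + 1) = (z+1) + ((n-k : ℕ):ℚ) := by ring
        rw [h6]
        calc (((n+1).choose k : ℚ) * pA x k) * (((n-k : ℕ):ℚ)+1) * ((z+1) + ((n-k : ℕ):ℚ)) ^ (n-k)
            = (((n+1).choose k : ℚ) * (((n-k : ℕ):ℚ)+1)) * (pA x k * ((z+1) + ((n-k : ℕ):ℚ)) ^ (n-k)) := by ring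
          _ = (((n+1:ℕ):ℚ) * (n.choose k : ℚ)) * (pA x k * ((z+1) + ((n-k : ℕ):ℚ)) ^ (n-k)) := by
              rw [← h3, h2]
          _ = _ := by ring
      rw [Finset.sum_congr rfl e2, ← Finset.mul_sum, ih x (z+1)]
    have hdQ : ∀ z : ℚ, (Polynomial.derivative Q).eval z
        = ((n+1:ℕ):ℚ) * (x + (z+1) + n) ^ n := by
      intro z
      rw [hQdef, Polynomial.derivative_pow]
      simp
      left
      ring_nf
    have hder : Polynomial.derivative P = Polynomial.derivative Q := by
      apply Polynomial.funext
      intro z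
      rw [hdP z, hdQ z]
    have hconst : P - Q = Polynomial.C ((P-Q).coeff 0) := by
      apply Polynomial.eq_C_of_natDegree_eq_zero
      apply Polynomial.natDegree_eq_zero_of_derivative_eq_zero
      rw [map_sub, hder, sub_self]
    have hP0 : P.eval (-x - ((n+1:ℕ):ℚ)) = 0 := by
      rw [hPeval]
      have e3 : ∀ k ∈ range (n+2),
          ((n+1).choose k : ℚ) * pA x k * ((-x - ((n+1:ℕ):ℚ)) + ((n+1-k : ℕ):ℚ)) ^ (n+1-k)
          = x * ((-1:ℚ)^(n+1-k) * ((n+1).choose k : ℚ) * (x + k)^n) := by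
        intro k hk
        simp only [mem_range] at hk
        have h7 : ((-x - ((n+1:ℕ):ℚ)) + ((n+1-k : ℕ):ℚ)) = -(x + k) := by
          have : ((n+1-k : ℕ):ℚ) = ((n+1:ℕ):ℚ) - (k:ℚ) := by
            rw [Nat.cast_sub (by omega)]
          rw [this]; ring
        rw [h7, neg_pow]
        rcases Nat.eq_zero_or_pos k with hk0 | hk1
        · subst hk0
          simp [pA]
          rw [pow_succ]
          ring
        · have hpa : pA x k = x * (x + k)^(k-1) := by
            rw [pA, if_neg (by omega)]
          rw [hpa]
          have h8 : (x+(k:ℚ))^(k-1) * (x+(k:ℚ))^(n+1-k) = (x+(k:ℚ))^n := by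
            rw [← pow_add]
            congr 1
            omega
          calc ((n+1).choose k : ℚ) * (x * (x + k)^(k-1)) * ((-1:ℚ)^(n+1-k) * (x + k)^(n+1-k))
              = x * ((-1:ℚ)^(n+1-k) * ((n+1).choose k : ℚ) * ((x+(k:ℚ))^(k-1) * (x+(k:ℚ))^(n+1-k))) := by ring
            _ = _ := by rw [h8]
      rw [Finset.sum_congr rfl e3, ← Finset.mul_sum, fd (n+1) n (by omega) x, mul_zero]
    have hQ0 : Q.eval (-x - ((n+1:ℕ):ℚ)) = 0 := by
      rw [hQeval]
      have : x + (-x - ((n+1:ℕ):ℚ)) + ((n+1:ℕ):ℚ) = 0 := by ring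
      rw [this]
      exact zero_pow (by omega)
    have hPQ : P = Q := by
      have h9 : (P - Q).eval (-x - ((n+1:ℕ):ℚ)) = 0 := by
        rw [Polynomial.eval_sub, hP0, hQ0, sub_zero]
      have h10 : (P - Q).coeff 0 = 0 := by
        rw [hconst] at h9
        simpa using h9
      have := hconst
      rw [h10] at this
      simpa [sub_eq_zero] using this
    have := congrArg (Polynomial.eval y) hPQ
    rw [hPeval, hQeval] at this
    exact this

lemma pA_mul (z : ℚ) (m : ℕ) : (z + (m:ℚ)) * pA z m = z * (z + m)^m := by
  rcases Nat.eq_zero_or_pos m with h | h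
  · subst h; simp [pA]
  · rw [pA, if_neg (by omega)]
    have : (z + (m:ℚ)) * (z * (z + m)^(m-1)) = z * ((z+m) * (z+m)^(m-1)) := by ring
    rw [this, ← pow_succ']
    congr 2
    omega

lemma abel_symm (n : ℕ) (x y : ℚ) :
    (x + y + n) * ∑ k ∈ range (n+1), (n.choose k : ℚ) * pA x k * pA y (n-k)
      = (x + y) * (x + y + n) ^ n := by
  rw [Finset.mul_sum]
  have e1 : ∀ k ∈ range (n+1),
      (x + y + (n:ℚ)) * ((n.choose k : ℚ) * pA x k * pA y (n-k))
      = (n.choose k : ℚ) * pA x k * (y * (y + ((n-k:ℕ):ℚ))^(n-k))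
        + (n.choose k : ℚ) * (x * (x + (k:ℚ))^k) * pA y (n-k) := by
    intro k hk
    simp only [mem_range] at hk
    have hc : ((n-k:ℕ):ℚ) = (n:ℚ) - (k:ℚ) := by rw [Nat.cast_sub (by omega)]
    have hsplit : x + y + (n:ℚ) = (x + (k:ℚ)) + (y + ((n-k:ℕ):ℚ)) := by rw [hc]; ring
    rw [hsplit]
    have h1 := pA_mul y (n-k)
    have h2 := pA_mul x k
    calc ((x + (k:ℚ)) + (y + ((n-k:ℕ):ℚ))) * ((n.choose k : ℚ) * pA x k * pA y (n-k))
        = (n.choose k : ℚ) * pA x k * ((y + ((n-k:ℕ):ℚ)) * pA y (n-k))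
          + (n.choose k : ℚ) * ((x + (k:ℚ)) * pA x k) * pA y (n-k) := by ring
      _ = _ := by rw [h1, h2]
  rw [Finset.sum_congr rfl e1, Finset.sum_add_distrib]
  have e2 : ∑ k ∈ range (n+1), (n.choose k : ℚ) * pA x k * (y * (y + ((n-k:ℕ):ℚ))^(n-k))
      = y * (x + y + n)^n := by
    rw [← abel n x y, Finset.mul_sum]
    refine Finset.sum_congr rfl fun k hk => ?_
    ring
  have e3 : ∑ k ∈ range (n+1), (n.choose k : ℚ) * (x * (x + (k:ℚ))^k) * pA y (n-k)
      = x * (x + y + n)^n := by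
    have hrefl := Finset.sum_range_reflect
      (fun k => (n.choose k : ℚ) * (x * (x + (k:ℚ))^k) * pA y (n-k)) (n+1)
    rw [← hrefl]
    have e4 : ∀ j ∈ range (n+1),
        (n.choose (n+1-1-j) : ℚ) * (x * (x + ((n+1-1-j:ℕ):ℚ))^(n+1-1-j)) * pA y (n-(n+1-1-j))
        = x * ((n.choose j : ℚ) * pA y j * (x + ((n-j:ℕ):ℚ))^(n-j)) := by
      intro j hj
      simp only [mem_range] at hj
      have h5 : n+1-1-j = n-j := by omega
      have h6 : n-(n-j) = j := by omega
      rw [h5, h6, Nat.choose_symm (by omega : j ≤ n)]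
      ring
    rw [Finset.sum_congr rfl e4, ← Finset.mul_sum, abel n y x]
    ring_nf
  rw [e2, e3]
  ring

lemma pA_one (j : ℕ) : pA 1 j = ((j+1:ℕ):ℚ)^(j-1) := by
  rcases Nat.eq_zero_or_pos j with h | h
  · subst h; simp [pA]
  · rw [pA, if_neg (by omega)]
    push_cast
    ring_nf

lemma key (m : ℕ) :
    ((m:ℚ)+2) * ∑ k ∈ range (m+1),
        (m.choose k : ℚ) * ((k+1:ℕ):ℚ)^(k-1) * (((m-k)+1:ℕ):ℚ)^((m-k)-1)
      = 2 * ((m:ℚ)+2)^m := by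
  have h := abel_symm m 1 1
  simp only [pA_one] at h
  have e : (1 + 1 + (m:ℚ)) = ((m:ℚ)+2) := by ring
  rw [e] at h
  rw [h]
  ring

/-- The sequence defined by `b 1 = 1` and
`b n = (n/2) * ∑_{i=1}^{n-1} C(n-2, i-1) * b i * b (n-i)` for `n ≥ 2`
satisfies `b n = n^(n-2)` for all `n ≥ 1` (with the convention `1^(-1) = 1`,
realized here by truncated subtraction in the exponent). -/
theorem lines_of_play_count (b : ℕ → ℚ) (h1 : b 1 = 1)
    (hrec : ∀ n : ℕ, 2 ≤ n →
      b n = ((n : ℚ) / 2) *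
        ∑ i ∈ Finset.Ico 1 n, ((n - 2).choose (i - 1) : ℚ) * b i * b (n - i)) :
    ∀ n : ℕ, 1 ≤ n → b n = (n : ℚ) ^ (n - 2) := by
  intro n
  induction n using Nat.strong_induction_on with
  | _ n ih =>
    intro hn
    rcases eq_or_lt_of_le hn with h | h
    · rw [← h] at *
      rw [h1]
      norm_num
    · have hn2 : 2 ≤ n := h
      set m := n - 2 with hm
      have hnm : n = m + 2 := by omega
      rw [hrec n hn2, Finset.sum_Ico_eq_sum_range]
      have hr : n - 1 = m + 1 := by omega
      rw [hr]
      have e : ∀ k ∈ range (m+1),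
          ((n - 2).choose (1 + k - 1) : ℚ) * b (1+k) * b (n - (1+k))
          = (m.choose k : ℚ) * ((k+1:ℕ):ℚ)^(k-1) * (((m-k)+1:ℕ):ℚ)^((m-k)-1) := by
        intro k hk
        simp only [mem_range] at hk
        have hb1 : b (1+k) = ((1+k : ℕ):ℚ) ^ ((1+k) - 2) := by
          exact ih (1+k) (by omega) (by omega)
        have hb2 : b (n-(1+k)) = ((n-(1+k) : ℕ):ℚ) ^ ((n-(1+k)) - 2) := by
          exact ih (n-(1+k)) (by omega) (by omega)
        rw [hb1, hb2]
        have c1 : 1 + k - 1 = k := by omega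
        have c2 : 1 + k = k + 1 := by omega
        have c3 : (1 + k) - 2 = k - 1 := by omega
        have c4 : n - (1+k) = (m - k) + 1 := by omega
        have c5 : ((m-k)+1) - 2 = (m-k) - 1 := by omega
        rw [c1, c3, c4, c5, c2, ← hm]
      rw [Finset.sum_congr rfl e]
      have hS := key m
      have hc : (n:ℚ) = (m:ℚ) + 2 := by rw [hnm]; push_cast; ring
      rw [hc]
      linear_combination hS / 2
end

section
/- The number T_n = n^{n-2} of labeled trees on n vertices satisfies the recursion T_n = (n/2) * sum_{i=1}^{n-1} C(n-2, i-1) * T_i * T_{n-i} for all n ≥ 2. -/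
/-!
The polynomial `A_n(y) = ∑_{k=1}^n C(n,k) k^(k-1) (y + n - k)^(n-k)` satisfies
`A_n' = n A_{n-1}(y + 1)`, and for `n ≥ 2` its value at `y = -n` is an `n`-th finite difference
of `k ↦ k^(n-1)`, hence zero; so `A_n(y) = n (y + n)^(n-1)` (an Abel identity). At `y = 0` this
reads `∑_{k=1}^n C(n,k) k^(k-1) (n-k)^(n-k) = n^n`. Splitting `n = k + (n - k)` and using the
symmetry `k ↔ n - k` gives `n ∑_{k=1}^{n-1} C(n,k) k^(k-1) (n-k)^(n-k-1) = 2 (n-1) n^(n-1)`, and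
`C(n,k) k (n-k) = n (n-1) C(n-2,k-1)` turns this into the recursion.
-/

open Polynomial Finset

theorem Polynomial.eq_of_derivative_eq_of_eval_eq {R : Type*} [Ring R] [IsAddTorsionFree R]
    {p q : R[X]} (hd : derivative p = derivative q) (a : R) (ha : p.eval a = q.eval a) :
    p = q := by
  have hc := eq_C_of_derivative_eq_zero (p := p - q) (by rw [derivative_sub, hd, sub_self])
  have h0 : (p - q).coeff 0 = 0 := by
    simpa [ha] using (congrArg (eval a) hc).symm
  rw [h0, C_0] at hc
  exact sub_eq_zero.mp hc

theorem alternating_sum_range_choose_mul_pow_eq_zero {R : Type*} [CommRing R] {j n : ℕ}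
    (h : j < n) : ∑ k ∈ range (n + 1), (-1 : R) ^ (n - k) * n.choose k * (k : R) ^ j = 0 := by
  simpa [fwdDiff_iter_eq_sum_shift, zsmul_eq_mul] using
    congrFun (fwdDiff_iter_pow_eq_zero_of_lt (R := R) h) 0

section AbelPoly

variable (R : Type*) [CommRing R]

noncomputable def abelPoly (n : ℕ) : R[X] :=
  ∑ k ∈ Icc 1 n,
    (n.choose k : R[X]) * (k : R[X]) ^ (k - 1) * (X + ((n - k : ℕ) : R[X])) ^ (n - k)

variable {R}

theorem derivative_abelPoly_succ (n : ℕ) :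
    derivative (abelPoly R (n + 1)) = (n + 1 : R[X]) * (abelPoly R n).comp (X + 1) := by
  rw [abelPoly, abelPoly, sum_Icc_succ_top (by omega), Nat.sub_self, pow_zero, mul_one,
    derivative_add, derivative_sum, Polynomial.sum_comp, mul_sum]
  simp only [derivative_mul, derivative_natCast, derivative_pow, zero_mul, zero_add, mul_zero,
    add_zero]
  refine sum_congr rfl fun k hk => ?_
  have hsub : n + 1 - k = n - k + 1 := by have := (mem_Icc.mp hk).2; omega
  have hchoose : ((n + 1).choose k * (n - k + 1 : ℕ) : R[X]) = (n + 1) * n.choose k := by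
    rw [← hsub]
    exact_mod_cast congrArg (Nat.cast (R := R[X]))
      ((Nat.choose_mul_succ_eq n k).symm.trans (mul_comm _ _))
  simp only [hsub, Nat.add_sub_cancel, mul_comp, natCast_comp, pow_comp, add_comp, X_comp,
    derivative_add, derivative_X, derivative_natCast, map_natCast]
  push_cast at hchoose ⊢
  linear_combination (↑k ^ (k - 1) * (X + ((n - k : ℕ) : R[X]) + 1) ^ (n - k)) * hchoose

theorem eval_neg_abelPoly {n : ℕ} (hn : 2 ≤ n) : (abelPoly R n).eval (-(n : R)) = 0 := by
  rw [← alternating_sum_range_choose_mul_pow_eq_zero (R := R) (show n - 1 < n by omega),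
    range_eq_Ico, sum_eq_sum_Ico_succ_bot (by omega), Ico_add_one_right_eq_Icc, Nat.cast_zero,
    zero_pow (by omega), mul_zero, zero_add, abelPoly, eval_finsetSum]
  refine sum_congr rfl fun k hk => ?_
  obtain ⟨hk1, hkn⟩ := mem_Icc.mp hk
  have hpow : (k : R) ^ (n - 1) = k ^ (k - 1) * k ^ (n - k) := by
    rw [← pow_add]; congr 1; omega
  simp only [eval_mul, eval_pow, eval_add, eval_X, eval_natCast]
  rw [Nat.cast_sub hkn, show -(n : R) + (n - k) = -1 * k by ring, mul_pow, hpow]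
  ring

theorem abelPoly_eq [IsAddTorsionFree R] (n : ℕ) :
    abelPoly R n = (n : R[X]) * (X + (n : R[X])) ^ (n - 1) := by
  induction n with
  | zero => simp [abelPoly]
  | succ n ih =>
    rcases Nat.eq_zero_or_pos n with rfl | hn
    · simp [abelPoly]
    refine eq_of_derivative_eq_of_eval_eq ?_ (-(n + 1 : ℕ)) ?_
    · rw [derivative_abelPoly_succ, ih]
      simp only [derivative_mul, derivative_natCast, derivative_pow, derivative_add, derivative_X,
        mul_comp, natCast_comp, pow_comp, add_comp, X_comp, map_natCast, Nat.add_sub_cancel]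
      push_cast
      ring
    · rw [eval_neg_abelPoly (by omega)]
      simp [zero_pow hn.ne']

end AbelPoly

theorem sum_Icc_choose_mul_pow_mul_pow_eq_pow_self {n : ℕ} (hn : 0 < n) :
    ∑ k ∈ Icc 1 n, n.choose k * k ^ (k - 1) * (n - k) ^ (n - k) = n ^ n := by
  have h := congrArg (eval (0 : ℚ)) (abelPoly_eq (R := ℚ) n)
  simp only [abelPoly, eval_finsetSum, eval_mul, eval_pow, eval_add, eval_X, eval_natCast,
    zero_add] at h
  rw [← pow_succ', Nat.sub_add_cancel hn] at h
  exact_mod_cast h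

theorem sum_Ico_choose_mul_pow_mul_pow_reflect (n : ℕ) :
    ∑ k ∈ Ico 1 n, n.choose k * k ^ k * (n - k) ^ (n - k - 1) =
      ∑ k ∈ Ico 1 n, n.choose k * k ^ (k - 1) * (n - k) ^ (n - k) := by
  have h := sum_Ico_reflect (fun k => n.choose k * k ^ (k - 1) * (n - k) ^ (n - k)) 1 n.le_succ
  rw [Nat.add_sub_cancel_left, Nat.add_sub_cancel] at h
  rw [← h]
  refine sum_congr rfl fun k hk => ?_
  have hkn := (mem_Ico.mp hk).2.le
  rw [Nat.choose_symm hkn, Nat.sub_sub_self hkn, mul_right_comm]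

theorem mul_sum_Ico_choose_mul_pow_mul_pow_add {n : ℕ} (hn : 0 < n) :
    n * ∑ k ∈ Ico 1 n, n.choose k * k ^ (k - 1) * (n - k) ^ (n - k - 1) + 2 * n ^ (n - 1) =
      2 * n ^ n := by
  have hsplit : ∀ k ∈ Ico 1 n, n * (n.choose k * k ^ (k - 1) * (n - k) ^ (n - k - 1)) =
      n.choose k * k ^ (k - 1) * (n - k) ^ (n - k) +
        n.choose k * k ^ k * (n - k) ^ (n - k - 1) := by
    intro k hk
    obtain ⟨hk1, hkn⟩ := mem_Ico.mp hk
    obtain ⟨i, rfl⟩ := Nat.exists_eq_add_of_le' hk1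
    obtain ⟨j, hj⟩ := Nat.exists_eq_add_of_lt hkn
    rw [show n - (i + 1) = j + 1 by omega, hj]
    simp only [Nat.add_sub_cancel]
    ring
  have htop := sum_Icc_choose_mul_pow_mul_pow_eq_pow_self hn
  rw [Icc_eq_cons_Ico hn, sum_cons, Nat.sub_self, pow_zero, mul_one, Nat.choose_self,
    one_mul] at htop
  rw [mul_sum, sum_congr rfl hsplit, sum_add_distrib, sum_Ico_choose_mul_pow_mul_pow_reflect]
  omega

theorem Nat.choose_mul_mul_sub {n i : ℕ} (hi : 1 ≤ i) (hin : i < n) :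
    n.choose i * i * (n - i) = n * (n - 1) * (n - 2).choose (i - 1) := by
  obtain ⟨j, rfl⟩ := Nat.exists_eq_add_of_le' hi
  obtain ⟨m, rfl⟩ : ∃ m, n = m + 2 := ⟨n - 2, by omega⟩
  have hjm : m + 2 - (j + 1) = m + 1 - j := by omega
  rw [hjm, ← Nat.add_one_mul_choose_eq, show m + 2 - 1 = m + 1 from rfl, Nat.add_sub_cancel,
    Nat.add_sub_cancel, mul_assoc, ← Nat.choose_mul_succ_eq]
  ring

theorem Nat.pow_sub_two_mul_self {m : ℕ} (hm : 0 < m) : m ^ (m - 2) * m = m ^ (m - 1) := by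
  rcases Nat.lt_or_ge m 2 with h | h
  · obtain rfl : m = 1 := by omega
    rfl
  · rw [← pow_succ]; congr 1; omega

theorem cayley_recursion_nat {n : ℕ} (hn : 2 ≤ n) :
    n * ∑ i ∈ Ico 1 n, (n - 2).choose (i - 1) * i ^ (i - 2) * (n - i) ^ (n - i - 2) =
      2 * n ^ (n - 2) := by
  have hterm : ∀ i ∈ Ico 1 n,
      n * (n - 1) * ((n - 2).choose (i - 1) * i ^ (i - 2) * (n - i) ^ (n - i - 2)) =
        n.choose i * i ^ (i - 1) * (n - i) ^ (n - i - 1) := by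
    intro i hi
    obtain ⟨hi1, hin⟩ := mem_Ico.mp hi
    rw [← Nat.pow_sub_two_mul_self hi1, ← Nat.pow_sub_two_mul_self (Nat.sub_pos_of_lt hin)]
    calc _ = n * (n - 1) * (n - 2).choose (i - 1) * (i ^ (i - 2) * (n - i) ^ (n - i - 2)) := by
          ring
      _ = _ := by rw [← Nat.choose_mul_mul_sub hi1 hin]; ring
  have hsum := mul_sum_Ico_choose_mul_pow_mul_pow_add (show 0 < n by omega)
  rw [← sum_congr rfl hterm, ← mul_sum] at hsum
  obtain ⟨m, rfl⟩ : ∃ m, n = m + 2 := ⟨n - 2, by omega⟩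
  simp only [Nat.add_sub_cancel] at hsum ⊢
  rw [show m + 2 - 1 = m + 1 from rfl, pow_succ _ m, pow_add _ m 2] at hsum
  apply Nat.eq_of_mul_eq_mul_left (show 0 < (m + 2) * (m + 1) by positivity)
  linarith

/-- The number `T n = n^(n-2)` of labeled trees on `n` vertices satisfies the recursion
`T n = (n/2) * ∑_{i=1}^{n-1} C(n-2, i-1) * T i * T (n-i)` for all `n ≥ 2`. -/
theorem cayley_recursion (n : ℕ) (hn : 2 ≤ n) :
    (n : ℚ) ^ (n - 2) = ((n : ℚ) / 2) *
      ∑ i ∈ Finset.Ico 1 n,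
        ((n - 2).choose (i - 1) : ℚ) * (i : ℚ) ^ (i - 2) * ((n - i : ℕ) : ℚ) ^ (n - i - 2) := by
  have h := congrArg (Nat.cast : ℕ → ℚ) (cayley_recursion_nat hn)
  push_cast at h
  linarith
end

section
/- The number of parking functions of length n-1 is n^{n-2}. -/
/-!
Pollak's circular argument. Put `m` cars on a circle of `m + 1` spots, with preferences
`f : Fin m → ZMod (m + 1)`. Adding a constant `c` to all preferences rotates the picture, and
exactly one of the `m + 1` rotations is a parking function: by the cycle lemma, the partial sums
of "number of cars preferring spot `i`, minus one" drop by exactly `1` over a full turn, so there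
is exactly one starting spot from which all of them stay nonnegative. Hence
`(m + 1) ^ m = (m + 1) * #{parking functions of length m}`.
-/

/-- A parking function of length `m` is a tuple `(a 1, …, a m)` of integers with
`1 ≤ a k ≤ m` such that, when sorted into increasing order `a'_1 ≤ … ≤ a'_m`,
one has `a'_i ≤ i` for all `i`. -/
def IsParkingFunction (m : ℕ) (a : Fin m → ℕ) : Prop :=
  (∀ k : Fin m, 1 ≤ a k ∧ a k ≤ m) ∧
    ∀ i : Fin m, ((List.ofFn a).mergeSort (· ≤ ·))[i.val]! ≤ i.val + 1

open Finset

theorem List.countP_ofFn {α : Type*} {m : ℕ} (a : Fin m → α) (p : α → Bool) :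
    (List.ofFn a).countP p = #{k | p (a k)} := by
  rw [Finset.card_def, Finset.filter_val, ← Multiset.countP_map a _ (fun x => p x = true),
    Fin.univ_val_map, Multiset.coe_countP]
  simp

theorem List.SortedLE.getElem_le_iff_lt_countP {α : Type*} [LinearOrder α] {l : List α}
    (hl : l.SortedLE) {i : ℕ} (hi : i < l.length) (v : α) :
    l[i] ≤ v ↔ i < l.countP (· ≤ v) := by
  constructor
  · intro h
    have hprefix : (l.take (i + 1)).countP (· ≤ v) = i + 1 := by
      rw [List.countP_eq_length.mpr, List.length_take_of_le hi]
      intro x hx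
      obtain ⟨t, ht, rfl⟩ := List.mem_take_iff_getElem.mp hx
      simpa using (hl.getElem_le_getElem_of_le (by omega)).trans h
    have := (List.take_sublist (i + 1) l).countP_le (p := (· ≤ v))
    omega
  · intro h
    by_contra! hv
    have hsuffix : (l.drop i).countP (· ≤ v) = 0 := by
      rw [List.countP_eq_zero]
      intro x hx
      obtain ⟨t, ht, rfl⟩ := List.mem_iff_getElem.mp hx
      rw [List.getElem_drop]
      simpa using hv.trans_le (hl.getElem_le_getElem_of_le (by omega))
    have := List.countP_le_length (p := (· ≤ v)) (l := l.take i)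
    rw [← List.take_append_drop i l, List.countP_append, hsuffix] at h
    rw [List.length_take] at this
    omega

theorem isParkingFunction_iff_le_card {m : ℕ} (a : Fin m → ℕ) :
    IsParkingFunction m a ↔
      (∀ k, 1 ≤ a k ∧ a k ≤ m) ∧ ∀ j ≤ m, j ≤ #{k | a k ≤ j} := by
  set l := (List.ofFn a).mergeSort (· ≤ ·)
  have hlen : l.length = m := by simp [l]
  have hcount (v : ℕ) : l.countP (· ≤ v) = #{k | a k ≤ v} := by
    simp [l, (List.mergeSort_perm _ _).countP_eq, List.countP_ofFn]
  have hsorted_le (i : ℕ) (hi : i < m) : l[i]! ≤ i + 1 ↔ i + 1 ≤ #{k | a k ≤ i + 1} := by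
    rw [getElem!_pos l i (by omega), List.sortedLE_mergeSort.getElem_le_iff_lt_countP, hcount]
    rfl
  refine and_congr_right fun _ => ⟨fun h j hj => ?_, fun h i => ?_⟩
  · obtain _ | i := j
    · exact Nat.zero_le _
    · exact (hsorted_le i (by omega)).mp (h ⟨i, by omega⟩)
  · exact (hsorted_le i i.isLt).mpr (h _ i.isLt)

theorem existsUnique_forall_le_add_of_add_eq_sub_one {N : ℕ} (hN : 0 < N) (P : ℕ → ℤ)
    (hP : ∀ j, P (j + N) = P j - 1) : ∃! s, s < N ∧ ∀ j < N, P s ≤ P (s + j) := by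
  have not_both {s t : ℕ} (hlt : s < t) (htN : t < N) (hs : ∀ j < N, P s ≤ P (s + j))
      (ht : ∀ j < N, P t ≤ P (t + j)) : False := by
    have hst := hs (t - s) (by omega)
    have hts := ht (s + N - t) (by omega)
    rw [Nat.add_sub_cancel' hlt.le] at hst
    rw [Nat.add_sub_cancel' (by omega), hP] at hts
    omega
  refine existsUnique_of_exists_of_unique ?_ fun s t ⟨hsN, hs⟩ ⟨htN, ht⟩ => ?_
  · obtain ⟨s₀, hs₀, hmin₀⟩ := (range N).exists_min_image P (nonempty_range_iff.mpr hN.ne')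
    have hmin : ∃ s, s < N ∧ ∀ u < N, P s ≤ P u :=
      ⟨s₀, mem_range.mp hs₀, fun u hu => hmin₀ u (mem_range.mpr hu)⟩
    obtain ⟨hsN, hs⟩ := Nat.find_spec hmin
    -- Take the first minimiser of `P` on `[0, N)`: its strict advantage over earlier indices
    -- survives the drop by `1` over a period, which covers the indices past `N`.
    have hfirst : ∀ u < Nat.find hmin, P (Nat.find hmin) < P u := by
      intro u hu
      by_contra! h
      exact Nat.find_min hmin hu ⟨by omega, fun v hv => h.trans (hs v hv)⟩
    refine ⟨Nat.find hmin, hsN, fun j hj => ?_⟩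
    by_cases hwrap : Nat.find hmin + j < N
    · exact hs _ hwrap
    · have := hfirst (Nat.find hmin + j - N) (by omega)
      have := hP (Nat.find hmin + j - N)
      rw [Nat.sub_add_cancel (by omega)] at this
      omega
  · rcases lt_trichotomy s t with hlt | heq | hgt
    · exact (not_both hlt htN hs ht).elim
    · exact heq
    · exact (not_both hgt hsN ht hs).elim

theorem ZMod.val_eq_iff_eq_natCast {n i : ℕ} [NeZero n] {x : ZMod n} (hi : i < n) :
    x.val = i ↔ x = i := by
  constructor
  · rintro rfl
    exact (ZMod.natCast_zmod_val x).symm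
  · rintro rfl
    exact ZMod.val_cast_of_lt hi

/-- Parking functions with spots renumbered `0, …, m - 1` and placed on a circle of `m + 1`
spots; the extra spot `m` is the one that stays empty. -/
def IsZModParkingFunction (m : ℕ) (g : Fin m → ZMod (m + 1)) : Prop :=
  ∀ j ≤ m, j ≤ #{k | (g k).val < j}

theorem IsZModParkingFunction.val_lt {m : ℕ} {g : Fin m → ZMod (m + 1)}
    (hg : IsZModParkingFunction m g) (k : Fin m) : (g k).val < m := by
  have hall : #{k | (g k).val < m} = #(univ : Finset (Fin m)) :=
    le_antisymm (card_le_univ _) (by simpa using hg m le_rfl)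
  exact card_filter_eq_iff.mp hall k (mem_univ k)

theorem isParkingFunction_val_add_one_iff {m : ℕ} {g : Fin m → ZMod (m + 1)} :
    IsParkingFunction m (fun k => (g k).val + 1) ↔ IsZModParkingFunction m g := by
  simp only [isParkingFunction_iff_le_card, Nat.add_one_le_iff, le_add_iff_nonneg_left,
    Nat.zero_le, true_and]
  exact and_iff_right_of_imp IsZModParkingFunction.val_lt

theorem card_isParkingFunction_eq_card_isZModParkingFunction (m : ℕ) :
    Nat.card {a // IsParkingFunction m a} = Nat.card {g // IsZModParkingFunction m g} := by
  refine (Nat.card_eq_of_bijective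
    (fun g => ⟨fun k => (g.1 k).val + 1, isParkingFunction_val_add_one_iff.mpr g.2⟩)
    ⟨fun g₁ g₂ h => ?_, fun a => ?_⟩).symm
  · ext k : 2
    exact ZMod.val_injective _ (by simpa using congr_fun (congr_arg Subtype.val h) k)
  · have hval (k : Fin m) : (((a.1 k - 1 : ℕ) : ZMod (m + 1))).val + 1 = a.1 k := by
      have := a.2.1 k
      rw [ZMod.val_cast_of_lt (by omega)]
      omega
    refine ⟨⟨fun k => ((a.1 k - 1 : ℕ) : ZMod (m + 1)), ?_⟩, Subtype.ext (funext hval)⟩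
    rw [← isParkingFunction_val_add_one_iff, funext hval]
    exact a.2

namespace ParkingFunction

variable {m : ℕ} (f : Fin m → ZMod (m + 1))

def prefCount (i : ℕ) : ℕ := #{k | f k = i}

def surplus (j : ℕ) : ℤ := ∑ i ∈ range j, ((prefCount f i : ℤ) - 1)

theorem surplus_add (s j : ℕ) :
    surplus f (s + j) = surplus f s + ∑ i ∈ range j, ((prefCount f (s + i) : ℤ) - 1) :=
  sum_range_add _ _ _

theorem surplus_succ (j : ℕ) : surplus f (j + 1) = surplus f j + ((prefCount f j : ℤ) - 1) :=
  sum_range_succ _ _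

theorem sum_prefCount_range : ∑ i ∈ range (m + 1), prefCount f i = m := by
  have := card_eq_sum_card_fiberwise (s := univ) (t := range (m + 1)) (f := fun k => (f k).val)
    fun k _ => mem_range.mpr (ZMod.val_lt _)
  rw [card_univ, Fintype.card_fin] at this
  refine (sum_congr rfl fun i hi => ?_).trans this.symm
  simp [prefCount, ZMod.val_eq_iff_eq_natCast (mem_range.mp hi)]

theorem surplus_add_period (j : ℕ) : surplus f (j + (m + 1)) = surplus f j - 1 := by
  induction j with
  | zero =>
    have := sum_prefCount_range f
    simp only [zero_add, surplus, sum_sub_distrib, ← Nat.cast_sum, this, sum_const, card_range]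
    simp
  | succ j ih =>
    have hperiod : prefCount f (j + (m + 1)) = prefCount f j := by simp [prefCount]
    rw [show j + 1 + (m + 1) = j + (m + 1) + 1 by ring, surplus_succ, ih, hperiod, surplus_succ]
    ring

theorem card_val_add_lt (c : ZMod (m + 1)) {j : ℕ} (hj : j ≤ m + 1) :
    (#{k | (f k + c).val < j} : ℤ) = surplus f ((-c).val + j) - surplus f (-c).val + j := by
  have hfibres : #{k | (f k + c).val < j} = ∑ i ∈ range j, prefCount f ((-c).val + i) := by
    rw [card_eq_sum_card_fiberwise (f := fun k => (f k + c).val) (t := range j)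
      fun k hk => by simpa using hk]
    refine sum_congr rfl fun i hi => ?_
    have hij : i < j := mem_range.mp hi
    have hshift : (((-c).val + i : ℕ) : ZMod (m + 1)) = i - c := by
      push_cast
      rw [ZMod.natCast_zmod_val]
      ring
    rw [filter_filter, prefCount, hshift]
    congr 1
    ext k
    simp only [mem_filter, mem_univ, true_and]
    rw [ZMod.val_eq_iff_eq_natCast (n := m + 1) (by omega), eq_sub_iff_add_eq]
    exact ⟨And.right, fun h => ⟨by rw [h, ZMod.val_cast_of_lt (by omega)]; exact hij, h⟩⟩
  rw [hfibres, surplus_add, Nat.cast_sum, sum_sub_distrib]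
  simp

theorem isZModParkingFunction_add_const_iff (c : ZMod (m + 1)) :
    IsZModParkingFunction m (fun k => f k + c) ↔
      ∀ j < m + 1, surplus f (-c).val ≤ surplus f ((-c).val + j) := by
  simp only [IsZModParkingFunction]
  refine forall_congr' fun j => ⟨fun h hj => ?_, fun h hj => ?_⟩
  · have := card_val_add_lt f c hj.le
    have := h (by omega)
    omega
  · have := card_val_add_lt f c (j := j) (by omega)
    have := h (by omega)
    omega

theorem existsUnique_add_const_isZModParkingFunction :
    ∃! c : ZMod (m + 1), IsZModParkingFunction m (fun k => f k + c) := by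
  obtain ⟨s, ⟨hs, hgood⟩, huniq⟩ :=
    existsUnique_forall_le_add_of_add_eq_sub_one m.succ_pos (surplus f) (surplus_add_period f)
  refine ⟨-(s : ZMod (m + 1)), ?_, fun c hc => ?_⟩
  · beta_reduce
    rw [isZModParkingFunction_add_const_iff, neg_neg, ZMod.val_cast_of_lt hs]
    exact hgood
  · beta_reduce at hc
    rw [isZModParkingFunction_add_const_iff] at hc
    rw [← huniq _ ⟨ZMod.val_lt _, hc⟩, ZMod.natCast_zmod_val, neg_neg]

end ParkingFunction

theorem card_isZModParkingFunction_mul (m : ℕ) :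
    Nat.card {g // IsZModParkingFunction m g} * (m + 1) = (m + 1) ^ m := by
  have hbij : Function.Bijective
      fun p : {g // IsZModParkingFunction m g} × ZMod (m + 1) => fun k => p.1.1 k - p.2 := by
    refine ⟨fun ⟨⟨g₁, h₁⟩, c₁⟩ ⟨⟨g₂, h₂⟩, c₂⟩ heq => ?_, fun f => ?_⟩
    · have h₂' : IsZModParkingFunction m fun k => (g₁ k - c₁) + c₂ := by
        simpa [congr_fun heq] using h₂
      have hc := (ParkingFunction.existsUnique_add_const_isZModParkingFunction
        fun k => g₁ k - c₁).unique (y₁ := c₁) (by simpa using h₁) h₂'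
      subst hc
      have : g₁ = g₂ := funext fun k => by simpa using congr_fun heq k
      subst this
      rfl
    · obtain ⟨c, hc, -⟩ := ParkingFunction.existsUnique_add_const_isZModParkingFunction f
      exact ⟨(⟨_, hc⟩, c), funext fun k => add_sub_cancel_right _ _⟩
  calc Nat.card {g // IsZModParkingFunction m g} * (m + 1)
      = Nat.card ({g // IsZModParkingFunction m g} × ZMod (m + 1)) := by
        rw [Nat.card_prod, Nat.card_zmod]
    _ = Nat.card (Fin m → ZMod (m + 1)) := Nat.card_eq_of_bijective _ hbij
    _ = (m + 1) ^ m := by simp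

theorem card_parking_functions_general (n : ℕ) :
    Nat.card {a : Fin (n - 1) → ℕ // IsParkingFunction (n - 1) a} = n ^ (n - 2) := by
  have h := card_isZModParkingFunction_mul (n - 1)
  rw [← card_isParkingFunction_eq_card_isZModParkingFunction] at h
  rcases n with _ | _ | m
  · simpa using h
  · simpa using h
  · exact Nat.eq_of_mul_eq_mul_right (Nat.succ_pos _) (h.trans (pow_succ _ _))

/-- The number of parking functions of length `n-1` is `n^(n-2)`. -/
theorem card_parking_functions (n : ℕ) (hn : 1 ≤ n) :
    Nat.card {a : Fin (n - 1) → ℕ // IsParkingFunction (n - 1) a} = n ^ (n - 2) :=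
  card_parking_functions_general n
end

section
/- If t_1, ..., t_{n-1} are transpositions in S_n with t_{n-1} ∘ ... ∘ t_1 = (1 2 ... n), then the transpositions t_1, ..., t_{n-1}, viewed as edges on the vertex set {1,...,n}, form a spanning tree of the complete graph. -/
/-!
Permutations `σ` with `v` reachable from `σ v` for every vertex `v` form a subgroup. Each `t k`
swaps the endpoints of an edge, so the product `finRotate n` lies in it; as the `n`-cycle is
transitive, the graph is connected. Distinct edges come from distinct transpositions, so there
are at most `n - 1` edges, and a connected graph on `n` vertices with fewer than `n` edges is a
tree.
-/

open Equiv SimpleGraph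

namespace SimpleGraph

variable {V : Type*} (G : SimpleGraph V)

def componentwisePerms : Subgroup (Perm V) where
  carrier := {σ | ∀ v, G.Reachable v (σ v)}
  one_mem' v := Reachable.refl v
  mul_mem' {σ τ} hσ hτ v := (hτ v).trans (hσ (τ v))
  inv_mem' {σ} hσ v := by simpa using (hσ (σ⁻¹ v)).symm

variable {G}

theorem swap_mem_componentwisePerms [DecidableEq V] {i j : V} (h : G.Reachable i j) :
    swap i j ∈ G.componentwisePerms := by
  intro v
  rw [swap_apply_def]
  split_ifs with hi hj
  · exact hi ▸ h
  · exact hj ▸ h.symm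
  · rfl

theorem connected_of_sameCycle [Nonempty V] {σ : Perm V} (hσ : σ ∈ G.componentwisePerms)
    (hcycle : ∀ x y, σ.SameCycle x y) : G.Connected := by
  refine (connected_iff G).2 ⟨fun x y => ?_, ‹_›⟩
  obtain ⟨k, rfl⟩ := hcycle x y
  exact zpow_mem hσ k x

theorem isTree_of_connected_of_card_edgeSet_lt [Finite V] (h : G.Connected)
    (hcard : Nat.card G.edgeSet < Nat.card V) : G.IsTree :=
  isTree_iff_connected_and_card.2 ⟨h, by have := h.card_vert_le_card_edgeSet_add_one; omega⟩

end SimpleGraph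

theorem Equiv.Perm.sameCycle_finRotate {n : ℕ} [NeZero n] (x y : Fin n) :
    (finRotate n).SameCycle x y := by
  refine ⟨(y - x).val, ?_⟩
  rw [zpow_natCast, ← Perm.iterate_eq_pow, ← finCycle_eq_finRotate_iterate, finCycle_apply,
    add_sub_cancel]

theorem Equiv.sym2_eq_of_swap_eq_swap {α : Type*} [DecidableEq α] {i j x y : α} (hij : i ≠ j)
    (h : swap i j = swap x y) : s(i, j) = s(x, y) := by
  have hi : swap x y i = j := by rw [← h, swap_apply_left]
  rw [swap_apply_def] at hi
  split_ifs at hi with hx hy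
  · rw [hx, hi]
  · rw [hy, ← hi, Sym2.eq_swap]
  · exact absurd hi hij

section swapGraph

variable {ι V : Type*} [DecidableEq V]

def swapGraph (t : ι → Perm V) : SimpleGraph V :=
  fromEdgeSet {e | ∃ (k : ι) (i j : V), i ≠ j ∧ t k = swap i j ∧ e = s(i, j)}

theorem mem_componentwisePerms_swapGraph {t : ι → Perm V} {k : ι} (hk : (t k).IsSwap) :
    t k ∈ (swapGraph t).componentwisePerms := by
  obtain ⟨i, j, hij, hk⟩ := hk
  rw [hk]
  refine swap_mem_componentwisePerms (Adj.reachable ?_)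
  exact (fromEdgeSet_adj _).2 ⟨⟨k, i, j, hij, hk, rfl⟩, hij⟩

theorem card_edgeSet_swapGraph_le [Finite ι] (t : ι → Perm V) :
    Nat.card (swapGraph t).edgeSet ≤ Nat.card ι := by
  let toSwap : Sym2 V → Perm V := Sym2.lift ⟨swap, swap_comm⟩
  have hinj : Set.InjOn toSwap (swapGraph t).edgeSet := by
    rw [swapGraph, edgeSet_fromEdgeSet]
    intro e he e' he'
    obtain ⟨⟨-, i, j, hij, -, rfl⟩, -⟩ := he
    obtain ⟨⟨-, x, y, -, -, rfl⟩, -⟩ := he'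
    exact sym2_eq_of_swap_eq_swap hij
  calc Nat.card (swapGraph t).edgeSet
      ≤ Nat.card (Set.range t) := by
        rw [Nat.card_coe_set_eq, Nat.card_coe_set_eq]
        refine Set.ncard_le_ncard_of_injOn toSwap ?_ hinj (Set.finite_range t)
        rw [swapGraph, edgeSet_fromEdgeSet]
        rintro _ ⟨⟨k, i, j, -, hk, rfl⟩, -⟩
        exact ⟨k, hk⟩
    _ ≤ Nat.card ι := Finite.card_range_le t

end swapGraph

/-- If `t_1, …, t_{n-1}` are transpositions in `S_n` with
`t_{n-1} ∘ ⋯ ∘ t_1 = (1 2 … n)` (realized as `finRotate n`), then the transpositions,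
viewed as edges on the vertex set `Fin n` (the transposition `(i j)` giving the edge
`{i, j}`), form a spanning tree of the complete graph. -/
theorem factorization_edges_form_tree (n : ℕ) (hn : 1 ≤ n)
    (t : Fin (n - 1) → Equiv.Perm (Fin n)) (hswap : ∀ k, (t k).IsSwap)
    (hprod : (List.ofFn t).reverse.prod = finRotate n) :
    (SimpleGraph.fromEdgeSet
      {e : Sym2 (Fin n) | ∃ (k : Fin (n - 1)) (i j : Fin n),
        i ≠ j ∧ t k = Equiv.swap i j ∧ e = s(i, j)}).IsTree := by
  have : NeZero n := ⟨by omega⟩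
  have hrot : finRotate n ∈ (swapGraph t).componentwisePerms := by
    rw [← hprod]
    refine Subgroup.list_prod_mem _ fun σ hσ => ?_
    obtain ⟨k, rfl⟩ := List.mem_ofFn.1 (List.mem_reverse.1 hσ)
    exact mem_componentwisePerms_swapGraph (hswap k)
  refine isTree_of_connected_of_card_edgeSet_lt (connected_of_sameCycle hrot
    Perm.sameCycle_finRotate) ?_
  calc Nat.card (swapGraph t).edgeSet
      ≤ Nat.card (Fin (n - 1)) := card_edgeSet_swapGraph_le t
    _ < Nat.card (Fin n) := by simp only [Nat.card_eq_fintype_card, Fintype.card_fin]; omega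
end

section
/- If (a_1, ..., a_{m}) is a parking function of length m and the subsequence of terms lying in an interval {c+1,...,d-1} forms (after relabeling) a parking function on that interval, then the remaining terms form a parking function on the remaining values; i.e., removing a 'sub-parking-function' supported on a contiguous value interval from a parking function leaves a parking function on the remaining values. -/
lemma aux_sorted_getElem_le (L : List ℕ) (hL : L.Pairwise (· ≤ ·)) (k v : ℕ)
    (hk : k < L.length) (h : k + 1 ≤ L.countP (fun x => decide (x ≤ v))) :
    L[k]! ≤ v := by
  rw [getElem!_pos L k hk]
  by_contra hgt
  push_neg at hgt
  have h0 : (L.drop k).countP (fun x => decide (x ≤ v)) = 0 := by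
    rw [List.countP_eq_zero]
    intro x hx
    rw [List.mem_iff_getElem] at hx
    obtain ⟨i, hi, rfl⟩ := hx
    simp only [decide_eq_true_eq] at *
    rw [List.getElem_drop]
    have hki : k + i < L.length := by simp at hi; omega
    have hle : L[k] ≤ L[k + i] := by
      rcases Nat.eq_zero_or_pos i with h | h
      · simp [h]
      · exact hL.rel_get_of_lt (a := ⟨k, hk⟩) (b := ⟨k + i, hki⟩) (by simp; omega)
    omega
  have h1 : L.countP (fun x => decide (x ≤ v)) ≤ k := by
    conv_lhs => rw [← List.take_append_drop k L]
    rw [List.countP_append, h0]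
    have := List.countP_le_length (l := L.take k) (p := fun x => decide (x ≤ v))
    simp at this ⊢
    omega
  omega

lemma aux_countP_ge (L : List ℕ) (_hL : L.Pairwise (· ≤ ·)) (j v : ℕ) (hj : j ≤ L.length)
    (h : ∀ i, i < j → L[i]! ≤ v) :
    j ≤ L.countP (fun x => decide (x ≤ v)) := by
  have htake : (L.take j).countP (fun x => decide (x ≤ v)) = j := by
    have hlen : (L.take j).length = j := by simp [hj]
    have heq : (L.take j).countP (fun x => decide (x ≤ v)) = (L.take j).length := by
      rw [List.countP_eq_length]
      intro x hx
      rw [List.mem_iff_getElem] at hx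
      obtain ⟨i, hi, rfl⟩ := hx
      rw [hlen] at hi
      simp only [decide_eq_true_eq]
      have := h i hi
      rwa [getElem!_pos L i (lt_of_lt_of_le hi hj), ← List.getElem_take] at this
    rw [heq, hlen]
  conv_rhs => rw [← List.take_append_drop j L]
  rw [List.countP_append, htake]
  omega


/-- Removing a sub-parking-function supported on a contiguous interval of values
`{c+1, …, d-1}` from a parking function leaves a parking function on the remaining
values.  Precisely: let `(a_1, …, a_m)` be a parking function and suppose the multiset
`B` of its terms lying in `{c+1, …, d-1}` has exactly `d-1-c` elements and, when sorted
increasingly, its `k`-th term is at most `c+k` (i.e. it is a parking function on that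
interval).  Then the multiset of the remaining terms, after relabeling the remaining
values `{1,…,c} ∪ {d,…,m}` order-preservingly as `{1,…,m-(d-1-c)}`, is the multiset of
a parking function: its sorted `k`-th term is at most `k`. -/
theorem remove_sub_parking_function (m c d : ℕ) (hcd : c + 1 ≤ d) (hdm : d ≤ m + 1)
    (a : Fin m → ℕ) (hpf : IsParkingFunction m a)
    (B : Multiset ℕ)
    (hB : B = (Multiset.map a Finset.univ.val).filter (fun x => c + 1 ≤ x ∧ x ≤ d - 1))
    (hBcard : Multiset.card B = d - 1 - c)
    (hBpark : ∀ k : ℕ, k < d - 1 - c → (Multiset.sort B (· ≤ ·))[k]! ≤ c + k + 1) :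
    ∀ k : ℕ, k < m - (d - 1 - c) →
      (Multiset.sort
        (((Multiset.map a Finset.univ.val).filter
            (fun x => ¬(c + 1 ≤ x ∧ x ≤ d - 1))).map
          (fun x => if x ≤ c then x else x - (d - 1 - c))) (· ≤ ·))[k]! ≤ k + 1 := by
  intro k hk
  set t := d - 1 - c with ht
  set A : Multiset ℕ := Multiset.map a Finset.univ.val with hA
  have hAcard : Multiset.card A = m := by simp [hA]
  have hAco : A = ↑(List.ofFn a) := by
    rw [hA, Fin.univ_def]
    simp [List.ofFn_eq_map]
  -- counting form of the parking function hypothesis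
  have hcount : ∀ j, j ≤ m → j ≤ Multiset.countP (fun x => x ≤ j) A := by
    intro j hj
    rw [hAco, Multiset.coe_countP]
    have hperm := List.mergeSort_perm (List.ofFn a) (fun x y => x ≤ y)
    rw [← hperm.countP_eq]
    have hsorted : ((List.ofFn a).mergeSort (fun x y => x ≤ y)).Pairwise (· ≤ ·) := by
      have := List.pairwise_mergeSort (le := fun x y : ℕ => decide (x ≤ y))
        (fun a b c h1 h2 => by simp at *; omega)
        (fun a b => by simp; omega) (List.ofFn a)
      simpa [List.Pairwise] using this
    apply aux_countP_ge _ hsorted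
    · rw [hperm.length_eq, List.length_ofFn]; exact hj
    · intro i hi
      have him : i < m := by
        have := hperm.length_eq
        rw [List.length_ofFn] at this
        omega
      have := hpf.2 ⟨i, him⟩
      simp only at this
      exact this.trans (by omega)
  set C : Multiset ℕ := A.filter (fun x => ¬(c + 1 ≤ x ∧ x ≤ d - 1)) with hC
  have hsplit : ∀ (p : ℕ → Prop) [DecidablePred p],
      Multiset.countP p A = Multiset.countP p B + Multiset.countP p C := by
    intro p _
    rw [hB, hC, ← Multiset.countP_add, Multiset.filter_add_not]
  have hCcard : Multiset.card C = m - t := by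
    have h2 : Multiset.card B + Multiset.card C = Multiset.card A := by
      rw [hB, hC, ← Multiset.card_add, Multiset.filter_add_not]
    omega
  set f : ℕ → ℕ := fun x => if x ≤ c then x else x - t with hf
  -- reduce to a counting statement
  apply aux_sorted_getElem_le _ (Multiset.pairwise_sort _ _)
  · rw [Multiset.length_sort, Multiset.card_map, hCcard]; exact hk
  · rw [← Multiset.coe_countP, Multiset.sort_eq, Multiset.countP_map,
      ← Multiset.countP_eq_card_filter]
    have htm : t ≤ m := by omega
    have hdct : d = c + t + 1 := by omega
    have hBmem : ∀ x ∈ B, c + 1 ≤ x ∧ x ≤ d - 1 := by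
      intro x hx
      rw [hB] at hx
      exact (Multiset.mem_filter.mp hx).2
    have hCmem : ∀ x ∈ C, ¬(c + 1 ≤ x ∧ x ≤ d - 1) := by
      intro x hx
      exact (Multiset.mem_filter.mp hx).2
    rcases le_or_gt (k + 1) c with hkc | hkc
    · -- small case: values ≤ c
      have hcongr : Multiset.countP (fun x => f x ≤ k + 1) C
          = Multiset.countP (fun x => x ≤ k + 1) C := by
        apply Multiset.countP_congr rfl
        intro x hx
        have := hCmem x hx
        rw [hf]
        simp only [eq_iff_iff]
        split <;> omega
      rw [hcongr]
      have hB0 : Multiset.countP (fun x => x ≤ k + 1) B = 0 := by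
        rw [Multiset.countP_eq_zero]
        intro x hx
        have := hBmem x hx
        omega
      have := hsplit (fun x => x ≤ k + 1)
      have hc2 := hcount (k + 1) (by omega)
      omega
    · -- large case: shift by t
      have hcongr : Multiset.countP (fun x => f x ≤ k + 1) C
          = Multiset.countP (fun x => x ≤ k + 1 + t) C := by
        apply Multiset.countP_congr rfl
        intro x hx
        have := hCmem x hx
        rw [hf]
        simp only [eq_iff_iff]
        split <;> omega
      rw [hcongr]
      have hBle : Multiset.countP (fun x => x ≤ k + 1 + t) B ≤ t := by
        exact (Multiset.countP_le_card _ _).trans (le_of_eq hBcard)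
      have := hsplit (fun x => x ≤ k + 1 + t)
      have hc2 := hcount (k + 1 + t) (by omega)
      omega
end

section
/- For every n ≥ 1, C(3n-3, n-1)/(2n-1) is an integer. -/
/-- `C(3n-3, n-1) / (2n-1)` is an integer for all `n ≥ 1`, i.e. `2n-1` divides
`C(3n-3, n-1)`. -/
theorem ternary_catalan_integer (n : ℕ) (hn : 1 ≤ n) :
    (2 * n - 1) ∣ Nat.choose (3 * n - 3) (n - 1) := by
  obtain ⟨m, rfl⟩ := Nat.exists_eq_add_of_le hn
  have h1 : 2 * (1 + m) - 1 = 2 * m + 1 := by omega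
  have h2 : 3 * (1 + m) - 3 = 3 * m := by omega
  have h3 : 1 + m - 1 = m := by omega
  rw [h1, h2, h3]
  -- identity: (3m+1) * C(3m, m) = C(3m+1, 2m+1) * (2m+1)
  have key : (3 * m + 1) * Nat.choose (3 * m) m
      = Nat.choose (3 * m + 1) (2 * m + 1) * (2 * m + 1) := by
    have hsym : Nat.choose (3 * m) m = Nat.choose (3 * m) (2 * m) := by
      rw [← Nat.choose_symm (by omega : m ≤ 3 * m)]
      congr 1; omega
    rw [hsym]
    exact Nat.add_one_mul_choose_eq (3 * m) (2 * m)
  have hdvd : (2 * m + 1) ∣ (3 * m + 1) * Nat.choose (3 * m) m := by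
    rw [key]; exact Dvd.intro_left _ rfl
  have hcop : Nat.Coprime (2 * m + 1) (3 * m + 1) := by
    have h1 : Nat.gcd (2 * m + 1) (3 * m + 1) ∣ 2 * m + 1 := Nat.gcd_dvd_left _ _
    have h2 : Nat.gcd (2 * m + 1) (3 * m + 1) ∣ 3 * m + 1 := Nat.gcd_dvd_right _ _
    have h3 : Nat.gcd (2 * m + 1) (3 * m + 1) ∣ m := by
      have h := Nat.dvd_sub h2 h1
      have e : 3 * m + 1 - (2 * m + 1) = m := by omega
      rwa [e] at h
    have h4 : Nat.gcd (2 * m + 1) (3 * m + 1) ∣ 2 * m := Dvd.dvd.mul_left h3 2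
    have h5 := Nat.dvd_sub h1 h4
    have h6 : 2 * m + 1 - 2 * m = 1 := by omega
    rw [h6] at h5
    exact Nat.eq_one_of_dvd_one h5
  exact (Nat.Coprime.dvd_of_dvd_mul_left hcop hdvd)
end
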